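/- arXiv:2504.21551 — 2 statements merged into one kernel-verified Lean document; each statement's English description precedes it below -/
import Mathlib

section
/- (Approximation) Let (X, M) be a supermidpoint set with associated binary operation m(x,y) = M(x,y,y,y,…), and write m₀(x) = x and mₙ(x₀, …, xₙ) = m(x₀, m_{n-1}(x₁, …, xₙ)) for n ≥ 1. Then the following are equivalent: (1) m is cancellative, i.e. m(x,y) = m(x,z) implies y = z; (2) X satisfies the approximation property: for all sequences (xᵢ), (yᵢ), (zᵢ), (wᵢ) in X, if for every n ≥ 0 it holds that mₙ(x₀, …, x_{n-1}, zₙ) = mₙ(y₀, …, y_{n-1}, wₙ), then M(x₀, x₁, x₂, …) = M(y₀, y₁, y₂, …). -/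
/-- A midpoint operation: idempotent, commutative, satisfying transposition. -/
def IsMidpoint {A : Type} (m : A → A → A) : Prop :=
  (∀ x, m x x = x) ∧ (∀ x y, m x y = m y x) ∧
    (∀ x y z w, m (m x y) (m z w) = m (m x z) (m y w))

/-- Cancellation: `m x y = m x z` implies `y = z`. -/
def Cancellative {A : Type} (m : A → A → A) : Prop :=
  ∀ x y z, m x y = m x z → y = z

/-- Iterativity in the category of sets. -/
def Iterative {A : Type} (m : A → A → A) : Prop :=
  ∀ (X : Type) (c : X → A × X), ∃! u : X → A, ∀ x, u x = m (c x).1 (u (c x).2)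

/-- The unfolding property of an infinitary operation `M` with respect to `m`. -/
def Unfolding {A : Type} (m : A → A → A) (M : (ℕ → A) → A) : Prop :=
  ∀ x : ℕ → A, M x = m (x 0) (M fun i => x (i + 1))

/-- The canonicity property of an infinitary operation `M` with respect to `m`. -/
def Canonicity {A : Type} (m : A → A → A) (M : (ℕ → A) → A) : Prop :=
  ∀ x y : ℕ → A, (∀ i, y i = m (x i) (y (i + 1))) → y 0 = M x

/-- A supermidpoint structure on `A`: an infinitary operation satisfying
idempotency, commutativity, transposition and unfolding. -/
structure SupermidpointStr (A : Type) where
  M : (ℕ → A) → A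
  idem : ∀ x : A, M (fun _ => x) = x
  comm : ∀ x y : A, M (fun i => if i = 0 then x else y) = M (fun i => if i = 0 then y else x)
  transp : ∀ x : ℕ → ℕ → A,
    M (fun i => M (fun j => x i j)) = M (fun j => M (fun i => x i j))
  unfoldAx : ∀ x : ℕ → A,
    M x = M (fun i => if i = 0 then x 0 else M (fun j => x (j + 1)))

/-- The binary operation associated with a supermidpoint structure:
`m(x,y) = M(x,y,y,y,…)`. -/
def SupermidpointStr.mid {A : Type} (S : SupermidpointStr A) (x y : A) : A :=
  S.M (fun i => if i = 0 then x else y)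

/-- The derived `(n+1)`-ary midpoint operations: `m₀(x) = x` and
`mₙ(x₀,…,xₙ) = m(x₀, m_{n-1}(x₁,…,xₙ))`, applied to the first `n+1`
entries of a sequence. -/
def mfold {A : Type} (m : A → A → A) : ℕ → (ℕ → A) → A
  | 0, x => x 0
  | n + 1, x => m (x 0) (mfold m n fun i => x (i + 1))

/-!
The operation `m` of a supermidpoint set is idempotent, commutative and medial, and `M` is a
homomorphism: `M(m(pᵢ, qᵢ)) = m(M p, M q)` (transposition). If `m` is cancellative, the hypotheses
at `n` and `n + 1`, combined by the medial law, have the common prefix `m(xᵢ, yᵢ)`; cancelling it gives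
`m(m(xₙ, zₙ₊₁), wₙ) = m(m(yₙ, wₙ₊₁), zₙ)` for every `n`. Applying `M`, unfolding `M z` and `M w` once
and cancelling twice yields `M x = M y`. Conversely, if `m(c, u) = m(c, v)`, then `m(u, ·)` and
`m(v, ·)` agree on `c` and, wherever they agree on `s`, also on every `m(r, s)`; hence
`mₙ(u, …, u, c) = mₙ(v, …, v, c)` for all `n`, and approximation on constant sequences gives `u = v`.
-/

section Midpoint

variable {A : Type} {m : A → A → A}

theorem mfold_ite_eq_foldr (n : ℕ) (x : ℕ → A) (a : A) :
    mfold m n (fun i => if i < n then x i else a) = ((List.range n).map x).foldr m a := by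
  induction n generalizing x with
  | zero => rfl
  | succ n ih =>
    simp only [mfold, List.range_succ_eq_map, List.map_cons, List.map_map, List.foldr_cons,
      Nat.add_lt_add_iff_right, Nat.zero_lt_succ, if_true]
    rw [ih]
    rfl

theorem List.medial_foldr_map {ι : Type*}
    (hmed : ∀ a b c d, m (m a b) (m c d) = m (m a c) (m b d))
    (p q : ι → A) (a b : A) (l : List ι) :
    m ((l.map p).foldr m a) ((l.map q).foldr m b) =
      (l.map fun i => m (p i) (q i)).foldr m (m a b) := by
  induction l with
  | nil => rfl
  | cons i l ih => simp only [List.map_cons, List.foldr_cons, hmed, ih]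

theorem Cancellative.foldr_injective (hc : Cancellative m) (l : List A) :
    Function.Injective fun a => l.foldr m a := by
  induction l with
  | nil => exact fun _ _ h => h
  | cons x l ih => exact fun a b h => ih (hc _ _ _ h)

namespace IsMidpoint

theorem idem (hm : IsMidpoint m) (a : A) : m a a = a := hm.1 a

theorem comm (hm : IsMidpoint m) (a b : A) : m a b = m b a := hm.2.1 a b

theorem medial (hm : IsMidpoint m) (a b c d : A) : m (m a b) (m c d) = m (m a c) (m b d) :=
  hm.2.2 a b c d

theorem left_distrib (hm : IsMidpoint m) (a b c : A) : m a (m b c) = m (m a b) (m a c) := by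
  rw [← hm.medial, hm.idem]

theorem cancel_right (hm : IsMidpoint m) (hc : Cancellative m) {a b c : A}
    (h : m a c = m b c) : a = b :=
  hc c a b (by rwa [hm.comm c a, hm.comm c b])

theorem mid_mid_eq_of_mid_eq (hm : IsMidpoint m) {u v s : A} (hs : m u s = m v s) (r : A) :
    m u (m r s) = m v (m r s) := by
  rw [hm.left_distrib, hs, ← hm.medial, hm.comm u v, hm.medial, hs, ← hm.left_distrib]

theorem iterate_eq_of_mid_eq (hm : IsMidpoint m) {u v c : A} (h : m u c = m v c) (n : ℕ) :
    (m u)^[n] c = (m v)^[n] c := by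
  have invariant : ∀ n, m u ((m u)^[n] c) = m v ((m u)^[n] c) := by
    intro n
    induction n with
    | zero => exact h
    | succ n ih => rw [Function.iterate_succ_apply']; exact hm.mid_mid_eq_of_mid_eq ih u
  induction n with
  | zero => rfl
  | succ n ih => rw [Function.iterate_succ_apply', Function.iterate_succ_apply', invariant, ih]

theorem crossed_eq_of_foldr_eq (hm : IsMidpoint m) (hc : Cancellative m) {x y z w : ℕ → A}
    (h : ∀ n, ((List.range n).map x).foldr m (z n) = ((List.range n).map y).foldr m (w n))
    (n : ℕ) : m (m (x n) (z (n + 1))) (w n) = m (m (y n) (w (n + 1))) (z n) := by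
  have hx := h (n + 1)
  have hy := h n
  simp only [List.range_succ, List.map_append, List.foldr_append, List.map_cons, List.map_nil,
    List.foldr_cons, List.foldr_nil] at hx
  apply hc.foldr_injective ((List.range n).map fun i => m (x i) (y i))
  calc _ = m (((List.range n).map x).foldr m (m (x n) (z (n + 1))))
          (((List.range n).map y).foldr m (w n)) := (List.medial_foldr_map hm.medial ..).symm
    _ = m (((List.range n).map y).foldr m (m (y n) (w (n + 1))))
          (((List.range n).map x).foldr m (z n)) := by rw [hx, hy]
    _ = _ := by
      simp only [List.medial_foldr_map hm.medial, hm.comm (y _) (x _)]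

end IsMidpoint

end Midpoint

namespace SupermidpointStr

variable {A : Type} (S : SupermidpointStr A)

theorem unfolding : Unfolding S.mid S.M := S.unfoldAx

theorem M_mid (p q : ℕ → A) : S.M (fun i => S.mid (p i) (q i)) = S.mid (S.M p) (S.M q) := by
  have hcolumns : (fun j => S.M (fun i => if j = 0 then p i else q i))
      = fun j => if j = 0 then S.M p else S.M q := by
    funext j
    split_ifs <;> rfl
  have h := S.transp (fun i j => if j = 0 then p i else q i)
  rw [hcolumns] at h
  exact h

theorem isMidpoint : IsMidpoint S.mid := by
  refine ⟨fun a => ?_, S.comm, fun a b c d => ?_⟩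
  · simpa [SupermidpointStr.mid] using S.idem a
  · have h := S.M_mid (fun i => if i = 0 then a else b) (fun i => if i = 0 then c else d)
    have hpointwise : (fun i : ℕ => S.mid (if i = 0 then a else b) (if i = 0 then c else d))
        = fun i : ℕ => if i = 0 then S.mid a c else S.mid b d := by
      funext i
      split_ifs <;> rfl
    rw [hpointwise] at h
    exact h.symm

theorem M_eq_of_crossed_eq (hc : Cancellative S.mid) {x y z w : ℕ → A} (h0 : z 0 = w 0)
    (h : ∀ n, S.mid (S.mid (x n) (z (n + 1))) (w n) = S.mid (S.mid (y n) (w (n + 1))) (z n)) :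
    S.M x = S.M y := by
  have hm := S.isMidpoint
  have hM := congrArg S.M (funext h)
  simp only [S.M_mid] at hM
  rw [S.unfolding w, S.unfolding z, hm.medial (S.M x), hm.medial (S.M y),
    hm.comm (S.M fun i => w (i + 1)), h0] at hM
  exact hm.cancel_right hc (hm.cancel_right hc hM)

end SupermidpointStr

/-- Approximation: for a supermidpoint set, cancellativity of the associated
binary operation is equivalent to the approximation property. -/
theorem cancellative_iff_approximation (A : Type) (S : SupermidpointStr A) :
    Cancellative S.mid ↔
      ∀ x y z w : ℕ → A,
        (∀ n, mfold S.mid n (fun i => if i < n then x i else z n) =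
              mfold S.mid n (fun i => if i < n then y i else w n)) →
        S.M x = S.M y := by
  have hm := S.isMidpoint
  constructor
  · intro hc x y z w h
    simp only [mfold_ite_eq_foldr] at h
    exact S.M_eq_of_crossed_eq hc (by simpa using h 0) (hm.crossed_eq_of_foldr_eq hc h)
  · intro happrox c u v h
    have hright : S.mid u c = S.mid v c := by rw [hm.comm, h, hm.comm]
    have hconst := happrox (fun _ => u) (fun _ => v) (fun _ => c) (fun _ => c) fun n => by
      simpa only [mfold_ite_eq_foldr, List.foldr_map, List.foldr_const, List.length_range] using
        hm.iterate_eq_of_mid_eq hright n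
    simpa only [S.idem] using hconst
end

section
/- Let (X, m) and (Y, m') be iterative midpoint sets, each equipped with its unique superconvex structure extending the midpoint operation (i.e. satisfying ½·x + ½·y = m(x,y)). Then for a function f : X → Y the following are equivalent: (1) f is a midpoint homomorphism, i.e. f(m(x,y)) = m'(f x, f y); (2) f is affine, i.e. f preserves every superconvex combination Σ'ᵢ λᵢ·xᵢ in which only finitely many λᵢ are nonzero; (3) f is superaffine, i.e. f(Σ'ᵢ λᵢ·xᵢ) = Σ'ᵢ λᵢ·f(xᵢ) for every superconvex combination. -/
/-- A superconvex weight: a nonnegative sequence summing to 1. -/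
def IsWeight (lam : ℕ → ℝ) : Prop := (∀ i, 0 ≤ lam i) ∧ ∑' i, lam i = 1

/-- A superconvex structure on `X`: an operation of countable convex combination,
satisfying the projection and composition laws (on genuine weights). -/
structure SuperconvexStr (X : Type) where
  comb : (ℕ → ℝ) → (ℕ → X) → X
  proj : ∀ lam, IsWeight lam → ∀ k, lam k = 1 → (∀ i, i ≠ k → lam i = 0) →
    ∀ x, comb lam x = x k
  compos : ∀ lam, IsWeight lam → ∀ mu : ℕ → ℕ → ℝ, (∀ i, IsWeight (mu i)) →
    ∀ x : ℕ → X, comb lam (fun i => comb (mu i) x) = comb (fun j => ∑' i, lam i * mu i j) x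

/-- The binary combination `λ·x + (1-λ)·y`. -/
def SuperconvexStr.pair {X : Type} (S : SuperconvexStr X) (lam : ℝ) (x y : X) : X :=
  S.comb (fun i => if i = 0 then lam else if i = 1 then 1 - lam else 0)
    (fun i => if i = 0 then x else y)

/-- Cancellativity of a superconvex structure. -/
def SuperconvexStr.Cancellative {X : Type} (S : SuperconvexStr X) : Prop :=
  ∀ lam : ℝ, 0 < lam → lam < 1 → ∀ x y z : X, S.pair lam x z = S.pair lam y z → x = y

/-- Iterativity of a superconvex structure. -/
def SuperconvexStr.Iterative {X : Type} (S : SuperconvexStr X) : Prop :=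
  ∀ (x y : ℕ → X) (lam mu : ℕ → ℝ),
    (∀ i, 0 < lam i ∧ lam i < 1) → (∀ i, 0 < mu i ∧ mu i < 1) →
    (∀ i, lam i + mu i = 1) →
    (∀ i, x i = S.pair (lam i) (y i) (x (i + 1))) →
    Filter.Tendsto (fun n => ∏ j ∈ Finset.range n, mu j) Filter.atTop (nhds 0) →
    x 0 = S.comb (fun i => lam i * ∏ j ∈ Finset.range i, mu j) y

/-!
A midpoint homomorphism preserves every finitely supported dyadic combination, since a dyadic
weight with denominator `2 ^ (K + 1)` is the average of two with denominator `2 ^ K`. The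
combination `M x = Σ 2⁻⁽ⁱ⁺¹⁾ xᵢ` satisfies `M x = m x₀ (M (x ∘ succ))`; hence `s ↦ f (M s)` and
`s ↦ M' (f ∘ s)` solve the same recursion in the target, and iterativity forces them to agree.
Every weight `λ` is `Σ 2⁻⁽ⁿ⁺¹⁾ μₙ` with dyadic `μₙ`, chosen greedily below twice the rescaled
remainder, so by the composition law `f` preserves the combination with weights `λ`. Conversely,
the midpoint is the combination with the finitely supported weights `(1/2, 1/2)`.
-/

noncomputable section

open Filter Finset

lemma IsWeight.of_hasSum {w : ℕ → ℝ} (h0 : ∀ i, 0 ≤ w i) (h : HasSum w 1) : IsWeight w :=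
  ⟨h0, h.tsum_eq⟩

lemma IsWeight.hasSum {w : ℕ → ℝ} (hw : IsWeight w) : HasSum w 1 := by
  refine (Summable.hasSum_iff ?_).2 hw.2
  by_contra h
  simpa [tsum_eq_zero_of_not_summable h] using hw.2

lemma IsWeight.le_one {w : ℕ → ℝ} (hw : IsWeight w) (i : ℕ) : w i ≤ 1 :=
  le_hasSum hw.hasSum i fun j _ => hw.1 j

lemma isWeight_single (k : ℕ) : IsWeight (Pi.single k 1) :=
  .of_hasSum (fun i => by rw [Pi.single_apply]; split <;> norm_num) (hasSum_pi_single k 1)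

lemma IsWeight.two_mul_sub {w μ : ℕ → ℝ} (hw : IsWeight w) (hμ : IsWeight μ)
    (hle : ∀ j, μ j ≤ 2 * w j) : IsWeight (fun j => 2 * w j - μ j) :=
  .of_hasSum (fun j => by linarith [hle j]) <| by
    rw [show (1 : ℝ) = 2 * 1 - 1 by norm_num]; exact (hw.hasSum.mul_left 2).sub hμ.hasSum

def pairWeight (t : ℝ) : ℕ → ℝ := fun i => if i = 0 then t else if i = 1 then 1 - t else 0

lemma isWeight_pairWeight {t : ℝ} (h0 : 0 ≤ t) (h1 : t ≤ 1) : IsWeight (pairWeight t) :=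
  ⟨fun i => by unfold pairWeight; split_ifs <;> linarith, by
    rw [tsum_eq_sum (s := {0, 1}) (fun i hi => by simp at hi; simp [pairWeight, hi])]
    simp [pairWeight]⟩

lemma finite_support_pairWeight (t : ℝ) : (Function.support (pairWeight t)).Finite :=
  (Set.toFinite {0, 1}).subset fun i hi => by
    by_contra h
    simp only [Set.mem_insert_iff, Set.mem_singleton_iff, not_or] at h
    simp [pairWeight, h.1, h.2] at hi

def halfPowWeight (n : ℕ) : ℝ := (1 / 2) ^ (n + 1)

lemma isWeight_halfPowWeight : IsWeight halfPowWeight :=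
  .of_hasSum (fun n => by unfold halfPowWeight; positivity) <| by
    convert hasSum_geometric_two' 1 using 2 with n
    rw [halfPowWeight, div_pow, one_pow, pow_succ']; ring

namespace SuperconvexStr

variable {X : Type} (S : SuperconvexStr X)

lemma pair_eq_comb (t : ℝ) (x y : X) :
    S.pair t x y = S.comb (pairWeight t) fun i => if i = 0 then x else y :=
  rfl

lemma comb_single (k : ℕ) (x : ℕ → X) : S.comb (Pi.single k 1) x = x k :=
  S.proj _ (isWeight_single k) k (by simp) (fun i hi => by simp [hi]) x

lemma comb_half_add {α β : ℕ → ℝ} (hα : IsWeight α) (hβ : IsWeight β) (x : ℕ → X) :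
    S.comb (fun j => (α j + β j) / 2) x = S.pair (1 / 2) (S.comb α x) (S.comb β x) := by
  have hcomb : (fun i => if i = 0 then S.comb α x else S.comb β x) =
      fun i => S.comb (if i = 0 then α else β) x := by
    funext i; split_ifs <;> rfl
  rw [pair_eq_comb, hcomb, S.compos _ (isWeight_pairWeight (by norm_num) (by norm_num)) _
    fun i => by split_ifs <;> assumption]
  congr 1
  funext j
  rw [tsum_eq_sum (s := {0, 1}) (fun i hi => by simp at hi; simp [pairWeight, hi])]
  simp only [sum_pair zero_ne_one, pairWeight, ↓reduceIte, one_ne_zero]; ring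

lemma comb_halfPowWeight (x : ℕ → X) :
    S.comb halfPowWeight x = S.pair (1 / 2) (x 0) (S.comb halfPowWeight fun i => x (i + 1)) := by
  set ν : ℕ → ℝ := fun j => 2 * halfPowWeight j - (Pi.single 0 1 : ℕ → ℝ) j with hν
  have hνw : IsWeight ν := isWeight_halfPowWeight.two_mul_sub (isWeight_single 0) fun j => by
    rcases j with _ | j <;> simp [halfPowWeight, pow_succ]
  have hshift : S.comb halfPowWeight (fun i => x (i + 1)) = S.comb ν x := by
    rw [show (fun i => x (i + 1)) = fun i => S.comb (Pi.single (i + 1) 1) x from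
      funext fun i => (S.comb_single _ x).symm,
      S.compos _ isWeight_halfPowWeight _ fun i => isWeight_single (i + 1)]
    congr 1
    funext j
    rcases j with _ | k
    · simp [hν, halfPowWeight]
    · rw [tsum_eq_single k (fun i hi => by simp [hi])]
      simp only [hν, halfPowWeight, Pi.single_eq_same, Pi.single_eq_of_ne k.succ_ne_zero]; ring
  have hsplit : halfPowWeight = fun j => ((Pi.single 0 1 : ℕ → ℝ) j + ν j) / 2 := by
    funext j; simp only [hν]; ring
  rw [hshift, ← S.comb_single 0 x, ← comb_half_add S (isWeight_single 0) hνw, ← hsplit]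

end SuperconvexStr

lemma exists_le_sum_range_eq {c : ℕ → ℕ} {N t : ℕ} (h : t ≤ ∑ j ∈ range N, c j) :
    ∃ a ≤ c, (∀ j, N ≤ j → a j = 0) ∧ ∑ j ∈ range N, a j = t := by
  -- greedily take as much of each `c j` as still fits under `t`
  set a : ℕ → ℕ := fun j => min (c j) (t - ∑ i ∈ range j, c i) with ha
  have hpartial : ∀ n, ∑ j ∈ range n, a j = min (∑ j ∈ range n, c j) t := by
    intro n
    induction n with
    | zero => simp
    | succ n ih => rw [sum_range_succ, sum_range_succ, ih]; simp only [ha]; omega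
  refine ⟨a, fun j => min_le_left _ _, fun j hj => ?_, by rw [hpartial, min_eq_right h]⟩
  have : t ≤ ∑ i ∈ range j, c i := h.trans (sum_le_sum_of_subset (range_subset_range.2 hj))
  simp only [ha]; omega

lemma exists_eq_single_of_sum_range_eq_one {c : ℕ → ℕ} {N : ℕ} (hc : ∀ j, N ≤ j → c j = 0)
    (h : ∑ j ∈ range N, c j = 1) : ∃ k, c = Pi.single k 1 := by
  obtain ⟨k, hk, hck⟩ := exists_ne_zero_of_sum_ne_zero (h.trans_ne one_ne_zero)
  have hsplit := add_sum_erase (range N) c hk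
  refine ⟨k, funext fun j => ?_⟩
  by_cases hjk : j = k
  · subst hjk; rw [Pi.single_eq_same]; omega
  rw [Pi.single_eq_of_ne hjk]
  by_cases hj : j < N
  · exact sum_eq_zero_iff.1 (by omega) j (mem_erase.2 ⟨hjk, mem_range.2 hj⟩)
  · exact hc j (not_lt.1 hj)

def IsDyadicWeight (w : ℕ → ℝ) : Prop :=
  ∃ (K N : ℕ) (c : ℕ → ℕ), (∀ j, N ≤ j → c j = 0) ∧ ∑ j ∈ range N, c j = 2 ^ K ∧
    w = fun j => (c j : ℝ) / 2 ^ K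

lemma isWeight_div_two_pow {c : ℕ → ℕ} {K N : ℕ} (hc : ∀ j, N ≤ j → c j = 0)
    (hsum : ∑ j ∈ range N, c j = 2 ^ K) : IsWeight fun j => (c j : ℝ) / 2 ^ K := by
  refine ⟨fun j => by positivity, ?_⟩
  rw [tsum_eq_sum (s := range N) (fun j hj => by simp [hc j (by simpa using hj)]), ← sum_div]
  rw [← Nat.cast_sum, hsum]
  push_cast
  exact div_self (by positivity)

lemma IsDyadicWeight.isWeight {w : ℕ → ℝ} (hw : IsDyadicWeight w) : IsWeight w := by
  obtain ⟨K, N, c, hc, hsum, rfl⟩ := hw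
  exact isWeight_div_two_pow hc hsum

lemma IsWeight.exists_isDyadicWeight_le_two_mul {w : ℕ → ℝ} (hw : IsWeight w) :
    ∃ μ, IsDyadicWeight μ ∧ ∀ j, μ j ≤ 2 * w j := by
  obtain ⟨N, hN⟩ := (hw.hasSum.tendsto_sum_nat.eventually
    (eventually_gt_nhds (show (3 / 4 : ℝ) < 1 by norm_num))).exists
  set d : ℕ → ℕ := fun j => ⌊2 ^ (N + 2) * w j⌋₊
  have hd_le : ∀ j, (d j : ℝ) ≤ 2 ^ (N + 2) * w j := fun j =>
    Nat.floor_le (mul_nonneg (by positivity) (hw.1 j))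
  have hd_sum : 2 ^ (N + 1) ≤ ∑ j ∈ range N, d j := by
    have hN2 : (N : ℝ) ≤ 2 ^ N := by exact_mod_cast Nat.lt_two_pow_self.le
    have : (2 : ℝ) ^ (N + 1) ≤ ∑ j ∈ range N, (d j : ℝ) :=
      calc (2 : ℝ) ^ (N + 1) ≤ 2 ^ (N + 2) * ∑ j ∈ range N, w j - N := by
            rw [show (2 : ℝ) ^ (N + 1) = 2 * 2 ^ N by ring,
              show (2 : ℝ) ^ (N + 2) = 4 * 2 ^ N by ring]
            nlinarith [mul_lt_mul_of_pos_left hN (by positivity : (0 : ℝ) < 2 ^ N)]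
        _ = ∑ j ∈ range N, (2 ^ (N + 2) * w j - 1) := by rw [sum_sub_distrib, mul_sum]; simp
        _ ≤ ∑ j ∈ range N, (d j : ℝ) := sum_le_sum fun j _ => by
            linarith [Nat.lt_floor_add_one (2 ^ (N + 2) * w j)]
    exact_mod_cast this
  obtain ⟨a, hle, hsupp, hsum⟩ := exists_le_sum_range_eq hd_sum
  refine ⟨fun j => (a j : ℝ) / 2 ^ (N + 1), ⟨N + 1, N, a, hsupp, hsum, rfl⟩, fun j => ?_⟩
  rw [div_le_iff₀ (by positivity)]
  calc (a j : ℝ) ≤ d j := by exact_mod_cast hle j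
    _ ≤ 2 * w j * 2 ^ (N + 1) := (hd_le j).trans_eq (by ring)

lemma IsWeight.exists_isDyadicWeight_tsum_halfPowWeight_eq {w : ℕ → ℝ} (hw : IsWeight w) :
    ∃ μ : ℕ → ℕ → ℝ, (∀ n, IsDyadicWeight (μ n)) ∧
      (fun j => ∑' n, halfPowWeight n * μ n j) = w := by
  choose! pick hpick hle using fun v (hv : IsWeight v) => hv.exists_isDyadicWeight_le_two_mul
  -- `ρ n` is the weight still to be distributed after `n` steps, rescaled by `2 ^ n`
  set ρ : ℕ → ℕ → ℝ := fun n => (fun v j => 2 * v j - pick v j)^[n] w with hρ_def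
  have hρ : ∀ n, ρ (n + 1) = fun j => 2 * ρ n j - pick (ρ n) j := fun n =>
    Function.iterate_succ_apply' _ _ _
  have hρw : ∀ n, IsWeight (ρ n) := by
    intro n
    induction n with
    | zero => exact hw
    | succ n ih => rw [hρ]; exact ih.two_mul_sub (hpick _ ih).isWeight (hle _ ih)
  refine ⟨fun n => pick (ρ n), fun n => hpick _ (hρw n), funext fun j => ?_⟩
  have htel : ∀ n,
      ∑ k ∈ range n, halfPowWeight k * pick (ρ k) j = w j - (1 / 2) ^ n * ρ n j := by
    intro n
    induction n with
    | zero => simp [hρ_def]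
    | succ n ih => rw [sum_range_succ, ih, hρ]; simp only [halfPowWeight]; ring
  refine HasSum.tsum_eq <| (hasSum_iff_tendsto_nat_of_nonneg (fun n => mul_nonneg
    (by unfold halfPowWeight; positivity) ((hpick _ (hρw n)).isWeight.1 j)) _).2 ?_
  simp_rw [htel]
  have hrem : Tendsto (fun n => (1 / 2 : ℝ) ^ n * ρ n j) atTop (nhds 0) :=
    squeeze_zero (fun n => mul_nonneg (by positivity) ((hρw n).1 j))
      (fun n => mul_le_of_le_one_right (by positivity) ((hρw n).le_one j))
      (tendsto_pow_atTop_nhds_zero_of_lt_one (by norm_num) (by norm_num))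
  simpa using tendsto_const_nhds.sub hrem

section Preservation

variable {X Y : Type} (S : SuperconvexStr X) (S' : SuperconvexStr Y) (f : X → Y)

def PreservesComb (w : ℕ → ℝ) : Prop :=
  ∀ x : ℕ → X, f (S.comb w x) = S'.comb w fun i => f (x i)

variable {S S' f}

lemma PreservesComb.map_pair {t : ℝ} (h : PreservesComb S S' f (pairWeight t)) (x y : X) :
    f (S.pair t x y) = S'.pair t (f x) (f y) := by
  rw [S.pair_eq_comb, h, S'.pair_eq_comb]
  simp only [apply_ite f]

lemma preservesComb_single (k : ℕ) : PreservesComb S S' f (Pi.single k 1) := fun x => by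
  simp only [SuperconvexStr.comb_single]

lemma PreservesComb.half_add (hf : ∀ x y, f (S.pair (1 / 2) x y) = S'.pair (1 / 2) (f x) (f y))
    {α β : ℕ → ℝ} (hα : IsWeight α) (hβ : IsWeight β) (pα : PreservesComb S S' f α)
    (pβ : PreservesComb S S' f β) : PreservesComb S S' f fun j => (α j + β j) / 2 := fun x => by
  rw [S.comb_half_add hα hβ, hf, pα, pβ, S'.comb_half_add hα hβ]

lemma preservesComb_of_isDyadicWeight
    (hf : ∀ x y, f (S.pair (1 / 2) x y) = S'.pair (1 / 2) (f x) (f y))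
    {w : ℕ → ℝ} (hw : IsDyadicWeight w) : PreservesComb S S' f w := by
  obtain ⟨K, N, c, hc, hsum, rfl⟩ := hw
  induction K generalizing c with
  | zero =>
    obtain ⟨k, rfl⟩ := exists_eq_single_of_sum_range_eq_one hc (by simpa using hsum)
    convert preservesComb_single (S := S) (S' := S') (f := f) k using 1
    funext j
    simp [Pi.single_apply]
  | succ K ih =>
    obtain ⟨a, hac, ha, hasum⟩ := exists_le_sum_range_eq (t := 2 ^ K) (c := c) (N := N)
      (by rw [hsum, pow_succ]; omega)
    have hb : ∀ j, N ≤ j → c j - a j = 0 := fun j hj => by simp [hc j hj]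
    have hbsum : ∑ j ∈ range N, (c j - a j) = 2 ^ K := by
      rw [sum_tsub_distrib _ fun j _ => hac j, hsum, hasum, pow_succ]; omega
    have hsplit : (fun j => (c j : ℝ) / 2 ^ (K + 1)) =
        fun j => ((a j : ℝ) / 2 ^ K + ((c j - a j : ℕ) : ℝ) / 2 ^ K) / 2 := by
      funext j
      rw [Nat.cast_sub (hac j), pow_succ]
      ring
    rw [hsplit]
    exact (ih a ha hasum).half_add hf (isWeight_div_two_pow ha hasum)
      (isWeight_div_two_pow hb hbsum) (ih _ hb hbsum)

lemma preservesComb_halfPowWeight (hit : Iterative (S'.pair (1 / 2)))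
    (hf : ∀ x y, f (S.pair (1 / 2) x y) = S'.pair (1 / 2) (f x) (f y)) :
    PreservesComb S S' f halfPowWeight := by
  obtain ⟨u, -, huniq⟩ := hit (ℕ → X) fun s => (f (s 0), fun i => s (i + 1))
  have hleft : (fun s => f (S.comb halfPowWeight s)) = u :=
    huniq _ fun s => by rw [S.comb_halfPowWeight, hf]
  have hright : (fun s => S'.comb halfPowWeight fun i => f (s i)) = u :=
    huniq _ fun s => S'.comb_halfPowWeight _
  exact congrFun (hleft.trans hright.symm)

lemma PreservesComb.tsum_halfPowWeight (hit : Iterative (S'.pair (1 / 2)))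
    (hf : ∀ x y, f (S.pair (1 / 2) x y) = S'.pair (1 / 2) (f x) (f y))
    {μ : ℕ → ℕ → ℝ} (hμ : ∀ n, IsWeight (μ n)) (hpres : ∀ n, PreservesComb S S' f (μ n)) :
    PreservesComb S S' f fun j => ∑' n, halfPowWeight n * μ n j := fun x => by
  rw [← S.compos _ isWeight_halfPowWeight μ hμ, ← S'.compos _ isWeight_halfPowWeight μ hμ,
    preservesComb_halfPowWeight hit hf]
  simp only [hpres _ x]

lemma preservesComb_of_isWeight (hit : Iterative (S'.pair (1 / 2)))
    (hf : ∀ x y, f (S.pair (1 / 2) x y) = S'.pair (1 / 2) (f x) (f y))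
    {w : ℕ → ℝ} (hw : IsWeight w) : PreservesComb S S' f w := by
  obtain ⟨μ, hμ, rfl⟩ := hw.exists_isDyadicWeight_tsum_halfPowWeight_eq
  exact .tsum_halfPowWeight hit hf (fun n => (hμ n).isWeight)
    fun n => preservesComb_of_isDyadicWeight hf (hμ n)

end Preservation

end

theorem midpoint_hom_iff_affine_iff_superaffine_general (X Y : Type)
    (m : X → X → X) (m' : Y → Y → Y)
    (hit' : Iterative m')
    (S : SuperconvexStr X) (S' : SuperconvexStr Y)
    (hS : ∀ x y : X, S.pair (1 / 2) x y = m x y)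
    (hS' : ∀ x y : Y, S'.pair (1 / 2) x y = m' x y)
    (f : X → Y) :
    ((∀ x y, f (m x y) = m' (f x) (f y)) ↔
      (∀ lam, IsWeight lam → (Function.support lam).Finite →
        ∀ x : ℕ → X, f (S.comb lam x) = S'.comb lam (fun i => f (x i)))) ∧
    ((∀ x y, f (m x y) = m' (f x) (f y)) ↔
      (∀ lam, IsWeight lam →
        ∀ x : ℕ → X, f (S.comb lam x) = S'.comb lam (fun i => f (x i)))) := by
  have hit : Iterative (S'.pair (1 / 2)) := by
    rwa [show S'.pair (1 / 2) = m' from funext₂ hS']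
  have hhom : (∀ x y, f (m x y) = m' (f x) (f y)) ↔
      ∀ x y, f (S.pair (1 / 2) x y) = S'.pair (1 / 2) (f x) (f y) := by
    simp only [hS, hS']
  have hhalf : IsWeight (pairWeight (1 / 2)) := isWeight_pairWeight (by norm_num) (by norm_num)
  rw [hhom]
  exact ⟨⟨fun hf w hw _ => preservesComb_of_isWeight hit hf hw,
      fun h => PreservesComb.map_pair (h _ hhalf (finite_support_pairWeight _))⟩,
    ⟨fun hf w hw => preservesComb_of_isWeight hit hf hw,
      fun h => PreservesComb.map_pair (h _ hhalf)⟩⟩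

/-- For iterative midpoint sets equipped with their unique superconvex
structures, midpoint homomorphisms, affine maps and superaffine maps coincide. -/
theorem midpoint_hom_iff_affine_iff_superaffine (X Y : Type)
    (m : X → X → X) (m' : Y → Y → Y)
    (hm : IsMidpoint m) (hm' : IsMidpoint m')
    (hit : Iterative m) (hit' : Iterative m')
    (S : SuperconvexStr X) (S' : SuperconvexStr Y)
    (hS : ∀ x y : X, S.pair (1 / 2) x y = m x y)
    (hS' : ∀ x y : Y, S'.pair (1 / 2) x y = m' x y)
    (f : X → Y) :
    ((∀ x y, f (m x y) = m' (f x) (f y)) ↔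
      (∀ lam, IsWeight lam → (Function.support lam).Finite →
        ∀ x : ℕ → X, f (S.comb lam x) = S'.comb lam (fun i => f (x i)))) ∧
    ((∀ x y, f (m x y) = m' (f x) (f y)) ↔
      (∀ lam, IsWeight lam →
        ∀ x : ℕ → X, f (S.comb lam x) = S'.comb lam (fun i => f (x i)))) :=
  midpoint_hom_iff_affine_iff_superaffine_general X Y m m' hit' S S' hS hS' f
end
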